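/- arXiv:1104.4457 — 3 statements merged into one kernel-verified Lean document; each statement's English description precedes it below -/
import Mathlib

section
/- Let T = Σ_{i=1}^{2r} ξ_i where ξ_1,...,ξ_r are independent geometric random variables on ℕ with parameters αq_1,...,αq_r (i.e. P(ξ = x) = (αq_i)^x(1 - αq_i)) and ξ_{r+1},...,ξ_{2r} are independent geometric random variables with parameters αq_1^{-1},...,αq_r^{-1}, all independent. Then for every m ∈ ℕ, P(T = m) = α^m · a(q) · s_{γ_m}^{2r}(q), where a(q) = Π_{i=1}^r (1 - αq_i)(1 - αq_i^{-1}), γ_m = (m,0,...,0) ∈ ℕ^r, and s_{γ_m}^{2r} is the symplectic Schur function. -/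
/-- Length of the (0-indexed) `i`-th row of a symplectic Gelfand–Tsetlin pattern
(row `i` corresponds to `x^{i+1}` in the paper, of length `⌊(i+2)/2⌋`). -/
def rowLen (i : ℕ) : ℕ := (i + 2) / 2

/-- A symplectic Gelfand–Tsetlin pattern of depth `k`: rows `x 0, …, x (k-1)` of
nonnegative integers (entries outside the pattern are `0`), with consecutive rows
interlacing: `x i j ≤ x (i+1) j` and `x (i+1) (j+1) ≤ x i j`. -/
structure SGT (k : ℕ) where
  x : ℕ → ℕ → ℕ
  zero_outside : ∀ i j, (k ≤ i ∨ rowLen i ≤ j) → x i j = 0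
  le_above : ∀ i j, i + 1 < k → j < rowLen i → x i j ≤ x (i+1) j
  above_le : ∀ i j, i + 1 < k → j + 1 < rowLen (i+1) → x (i+1) (j+1) ≤ x i j

/-- Sum `|x^{i+1}|` of the coordinates of row `i` of a pattern. -/
def rowSum {k : ℕ} (P : SGT k) (i : ℕ) : ℕ := ∑ j ∈ Finset.range (rowLen i), P.x i j

/-- The monomial weight `w_x^k(q)` of a symplectic Gelfand–Tsetlin pattern. -/
noncomputable def weight {k : ℕ} (P : SGT k) (q : ℕ → ℝ) : ℝ :=
  ∏ i ∈ Finset.range k,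
    q (i / 2) ^ ((if i % 2 = 0 then (1 : ℤ) else -1) *
      ((rowSum P i : ℤ) - (if i = 0 then 0 else (rowSum P (i - 1) : ℤ))))

/-- The symplectic Schur function `s_λ^k(q)`, a (finite) sum of weights over all
patterns of depth `k` with top row `λ`. -/
noncomputable def schur (k : ℕ) (lam : ℕ → ℕ) (q : ℕ → ℝ) : ℝ :=
  ∑ᶠ P ∈ {P : SGT k | ∀ j, P.x (k - 1) j = lam j}, weight P q

/-!
Interlacing forces a symplectic Gelfand–Tsetlin pattern with top row `(m, 0, …, 0)` to vanish
outside its first column `x^1_1 ≤ x^2_1 ≤ ⋯ ≤ x^{2r}_1 = m`. The increments of that column form an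
arbitrary weak composition of `m` into `2r` parts, and the weight of the pattern is
`∏ q_i ^ (increment in row 2i-1 - increment in row 2i)`. Hence `s_{γ_m}^{2r}(q)` is the complete
homogeneous symmetric polynomial `h_m(q_1, q_1⁻¹, …, q_r, q_r⁻¹)`. On the probabilistic side,
independence gives `P(T = m) = ∑_{d_1 + ⋯ + d_{2r} = m} ∏ p_i ^ d_i (1 - p_i) = a(q) h_m(p)` with
`p = (αq_1, …, αq_r, αq_1⁻¹, …, αq_r⁻¹)`, and `h_m(p) = α^m h_m(q, q⁻¹)` by homogeneity and
symmetry.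
-/

open Finset

lemma Fin.sum_filter_val_le {M : Type*} [AddCommMonoid M] {k : ℕ} (e : Fin k → M) (i : Fin k) :
    ∑ u : Fin k with u.val ≤ i.val, e u =
      (if (i : ℕ) = 0 then 0 else ∑ u : Fin k with u.val ≤ i.val - 1, e u) + e i := by
  split_ifs with hi
  · rw [zero_add, ← sum_singleton e i]
    congr 1
    ext u
    simp [Fin.ext_iff, hi]
  · rw [add_comm, ← sum_insert (by simp; omega)]
    congr 1
    ext u
    simp only [mem_filter, mem_univ, true_and, mem_insert, Fin.ext_iff]
    omega

namespace SGT

variable {k : ℕ}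

@[ext] lemma ext {P P' : SGT k} (h : P.x = P'.x) : P = P' := by
  cases P; cases P'; cases h; rfl

lemma x_zero_le_x_zero_succ (P : SGT k) {i : ℕ} (hi : i + 1 < k) : P.x i 0 ≤ P.x (i + 1) 0 :=
  P.le_above i 0 hi (by unfold rowLen; omega)

lemma x_eq_zero_of_top_eq_single {m : ℕ} {P : SGT k}
    (hP : ∀ j, P.x (k - 1) j = if j = 0 then m else 0) {j : ℕ} (hj : j ≠ 0) (i : ℕ) :
    P.x i j = 0 := by
  rcases le_or_gt k i with hik | hik
  · exact P.zero_outside i j (.inl hik)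
  induction (show i ≤ k - 1 by omega) using Nat.decreasingInduction with
  | self => rw [hP, if_neg hj]
  | of_succ i hi ih =>
    by_cases hji : j < rowLen i
    · exact Nat.eq_zero_of_le_zero (ih (by omega) ▸ P.le_above i j (by omega) hji)
    · exact P.zero_outside i j (.inr (not_lt.mp hji))

lemma rowSum_eq_x_zero {P : SGT k} {i : ℕ} (hP : ∀ j, j ≠ 0 → P.x i j = 0) :
    rowSum P i = P.x i 0 :=
  sum_eq_single_of_mem 0 (mem_range.mpr (by unfold rowLen; omega)) fun j _ hj => hP j hj

def ofIncrements (e : Fin k → ℕ) : SGT k where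
  x i j := if i < k ∧ j = 0 then ∑ u : Fin k with u.val ≤ i, e u else 0
  zero_outside i j h := if_neg (by unfold rowLen at h; omega)
  le_above i j hi _ := by
    split_ifs with h h'
    · refine sum_le_sum_of_subset fun u => ?_
      simp only [mem_filter, mem_univ, true_and]
      omega
    · omega
    · exact Nat.zero_le _
    · exact le_rfl
  above_le i j _ _ := by simp

lemma ofIncrements_x (e : Fin k → ℕ) (i j : ℕ) :
    (ofIncrements e).x i j = if i < k ∧ j = 0 then ∑ u : Fin k with u.val ≤ i, e u else 0 := rfl

def increments (P : SGT k) (i : Fin k) : ℕ :=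
  P.x i 0 - if (i : ℕ) = 0 then 0 else P.x (i - 1) 0

lemma increments_ofIncrements (e : Fin k → ℕ) : (ofIncrements e).increments = e := by
  funext i
  rw [increments, ofIncrements_x, if_pos ⟨i.2, rfl⟩, Fin.sum_filter_val_le e i]
  split_ifs with h₀
  · simp
  · rw [ofIncrements_x, if_pos ⟨by omega, rfl⟩, Nat.add_sub_cancel_left]

lemma ofIncrements_x_top (e : Fin k → ℕ) (j : ℕ) :
    (ofIncrements e).x (k - 1) j = if j = 0 then ∑ i, e i else 0 := by
  rw [ofIncrements_x]
  rcases Nat.eq_zero_or_pos k with rfl | hk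
  · simp
  · by_cases hj : j = 0
    · rw [if_pos ⟨by omega, hj⟩, if_pos hj, filter_true_of_mem fun u _ => by omega]
    · rw [if_neg fun h => hj h.2, if_neg hj]

lemma sum_increments_filter_le (P : SGT k) {i : ℕ} (hi : i < k) :
    ∑ u : Fin k with u.val ≤ i, P.increments u = P.x i 0 := by
  induction i with
  | zero =>
    rw [Fin.sum_filter_val_le _ ⟨0, hi⟩, if_pos rfl, zero_add, increments, if_pos rfl,
      Nat.sub_zero]
  | succ i ih =>
    rw [Fin.sum_filter_val_le _ ⟨i + 1, hi⟩, if_neg (Nat.succ_ne_zero i), Nat.add_sub_cancel,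
      ih (by omega), increments, if_neg (Nat.succ_ne_zero i), Nat.add_sub_cancel]
    exact Nat.add_sub_of_le (P.x_zero_le_x_zero_succ hi)

lemma ofIncrements_increments {m : ℕ} {P : SGT k}
    (hP : ∀ j, P.x (k - 1) j = if j = 0 then m else 0) : ofIncrements P.increments = P := by
  ext i j
  rw [ofIncrements_x]
  split_ifs with h
  · rw [sum_increments_filter_le P h.1, h.2]
  · rcases not_and_or.mp h with hi | hj
    · exact (P.zero_outside i j (.inl (not_lt.mp hi))).symm
    · exact (x_eq_zero_of_top_eq_single hP hj i).symm

lemma sum_increments {m : ℕ} {P : SGT k} (hP : ∀ j, P.x (k - 1) j = if j = 0 then m else 0) :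
    ∑ i, P.increments i = m := by
  have := ofIncrements_x_top P.increments 0
  rwa [ofIncrements_increments hP, hP, if_pos rfl, if_pos rfl, eq_comm] at this

lemma weight_eq_prod_increments {P : SGT k} (hP : ∀ i j, j ≠ 0 → P.x i j = 0) (Q : ℕ → ℝ) :
    weight P Q =
      ∏ i : Fin k, (Q (i / 2) ^ (if (i : ℕ) % 2 = 0 then 1 else -1 : ℤ)) ^ P.increments i := by
  rw [weight, ← Fin.prod_univ_eq_prod_range]
  refine prod_congr rfl fun i _ => ?_
  rw [← zpow_natCast, ← zpow_mul, rowSum_eq_x_zero (hP i), increments]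
  congr 2
  split_ifs with hi
  · simp
  · rw [rowSum_eq_x_zero (hP _), Nat.cast_sub]
    exact (Nat.sub_add_cancel (Nat.pos_of_ne_zero hi)) ▸ P.x_zero_le_x_zero_succ (by omega)

end SGT

namespace MvPolynomial

variable {σ τ R : Type*} [Fintype σ] [DecidableEq σ] [CommSemiring R]

theorem eval_hsymm (c : σ → R) (n : ℕ) :
    eval c (hsymm σ R n) = ∑ e ∈ piAntidiag univ n, ∏ i, c i ^ e i := by
  rw [hsymm, map_sum, ← sum_coe_sort (piAntidiag univ n)]
  refine Fintype.sum_equiv ((Sym.equivNatSumOfFintype σ n).trans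
    (Equiv.subtypeEquivRight fun e => by simp)) _ _ fun s => ?_
  simp only [Sym.val_eq_coe, prod_multiset_map_count, map_prod, map_pow, eval_X,
    Equiv.trans_apply, Equiv.subtypeEquivRight_apply_coe, Sym.coe_equivNatSumOfFintype_apply_apply]
  refine prod_subset (subset_univ _) fun i _ hi => ?_
  rw [Multiset.count_eq_zero.mpr fun h => hi (Multiset.mem_toFinset.mpr h), pow_zero]

theorem eval_hsymm_comp_equiv [Fintype τ] [DecidableEq τ] (e : σ ≃ τ) (c : τ → R) (n : ℕ) :
    eval (c ∘ e) (hsymm σ R n) = eval c (hsymm τ R n) := by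
  rw [← eval_rename, rename_hsymm]

theorem eval_hsymm_const_mul (a : R) (c : σ → R) (n : ℕ) :
    eval (fun i => a * c i) (hsymm σ R n) = a ^ n * eval c (hsymm σ R n) := by
  rw [eval_hsymm, eval_hsymm, mul_sum]
  refine sum_congr rfl fun e he => ?_
  rw [← (mem_piAntidiag.mp he).1, ← prod_pow_eq_pow_sum, ← prod_mul_distrib]
  exact prod_congr rfl fun i _ => mul_pow a (c i) (e i)

end MvPolynomial

open MvPolynomial

theorem schur_single_row (k m : ℕ) (Q : ℕ → ℝ) :
    schur k (fun j => if j = 0 then m else 0) Q =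
      eval (fun i : Fin k => Q (i / 2) ^ (if (i : ℕ) % 2 = 0 then 1 else -1 : ℤ))
        (hsymm (Fin k) ℝ m) := by
  rw [schur, eval_hsymm, ← finsum_mem_coe_finset]
  symm
  refine finsum_mem_eq_of_bijOn SGT.ofIncrements
    (Set.InvOn.bijOn ⟨fun e _ => SGT.increments_ofIncrements e,
      fun P hP => SGT.ofIncrements_increments hP⟩ ?_ ?_) fun e _ => ?_
  · intro e he j
    rw [SGT.ofIncrements_x_top, (mem_piAntidiag.mp he).1]
  · exact fun P hP => mem_piAntidiag.mpr ⟨SGT.sum_increments hP, by simp⟩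
  · rw [SGT.weight_eq_prod_increments (fun i j hj => if_neg fun h => hj h.2),
      SGT.increments_ofIncrements]

section Probability

open MeasureTheory ProbabilityTheory

variable {ι Ω : Type*} [Fintype ι] [DecidableEq ι] [MeasurableSpace Ω] {μ : Measure Ω}
  {ξ : ι → Ω → ℕ}

theorem measure_sum_eq_sum_piAntidiag (hmeas : ∀ i, Measurable (ξ i)) (hindep : iIndepFun ξ μ)
    (m : ℕ) :
    μ {ω | ∑ i, ξ i ω = m} = ∑ e ∈ piAntidiag univ m, ∏ i, μ {ω | ξ i ω = e i} := by
  have hunion : {ω | ∑ i, ξ i ω = m} = ⋃ e ∈ piAntidiag univ m, ⋂ i, {ω | ξ i ω = e i} := by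
    ext ω
    simp only [Set.mem_ofPred_eq, Set.mem_iUnion, Set.mem_iInter, mem_piAntidiag, mem_univ,
      implies_true, and_true, exists_prop]
    exact ⟨fun h => ⟨_, h, fun _ => rfl⟩, fun ⟨e, he, hξ⟩ => by simp only [hξ, he]⟩
  rw [hunion, measure_biUnion_finset]
  · exact sum_congr rfl fun e _ =>
      hindep.meas_iInter fun i => ⟨{e i}, measurableSet_singleton _, rfl⟩
  · intro e _ e' _ hne
    refine Set.disjoint_left.mpr fun ω hω hω' => hne (funext fun i => ?_)
    exact (Set.mem_iInter.mp hω i : ξ i ω = e i).symm.trans (Set.mem_iInter.mp hω' i)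
  · exact fun e _ => .iInter fun i => hmeas i (measurableSet_singleton _)

theorem measure_sum_eq_of_geometric (hmeas : ∀ i, Measurable (ξ i)) (hindep : iIndepFun ξ μ)
    {p : ι → ℝ} (hp₀ : ∀ i, 0 ≤ p i) (hp₁ : ∀ i, p i ≤ 1)
    (hlaw : ∀ i x, μ {ω | ξ i ω = x} = ENNReal.ofReal (p i ^ x * (1 - p i))) (m : ℕ) :
    μ {ω | ∑ i, ξ i ω = m} =
      ENNReal.ofReal ((∏ i, (1 - p i)) * eval p (hsymm ι ℝ m)) := by
  have hnonneg : ∀ i x, 0 ≤ (1 - p i) * p i ^ x := fun i x =>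
    mul_nonneg (sub_nonneg.mpr (hp₁ i)) (pow_nonneg (hp₀ i) x)
  simp_rw [measure_sum_eq_sum_piAntidiag hmeas hindep, eval_hsymm, mul_sum, ← prod_mul_distrib]
  rw [ENNReal.ofReal_sum_of_nonneg fun e _ => prod_nonneg fun i _ => hnonneg i (e i)]
  refine sum_congr rfl fun e _ => ?_
  rw [ENNReal.ofReal_prod_of_nonneg fun i _ => hnonneg i (e i)]
  exact prod_congr rfl fun i _ => by rw [hlaw, mul_comm]

end Probability

def finSumFinEquivInterleave (r : ℕ) : Fin r ⊕ Fin r ≃ Fin (2 * r) where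
  toFun := Sum.elim (fun j => ⟨2 * j, by omega⟩) (fun j => ⟨2 * j + 1, by omega⟩)
  invFun u := if h : (u : ℕ) % 2 = 0 then .inl ⟨u / 2, by omega⟩ else .inr ⟨u / 2, by omega⟩
  left_inv := by
    rintro (j | j)
    · simp
    · simp [Fin.ext_iff]; omega
  right_inv u := by
    by_cases h : (u : ℕ) % 2 = 0 <;> simp [h, Fin.ext_iff] <;> omega

open MeasureTheory

/-- The law of `T = ξ_1 + … + ξ_{2r}`, a sum of independent geometric random
variables with parameters `αq_1,…,αq_r, αq_1⁻¹,…,αq_r⁻¹`, is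
`ν(m) = α^m a(q) s_{γ_m}^{2r}(q)`. -/
theorem law_of_sum_geometric (r : ℕ) (q : Fin r → ℝ) (α : ℝ)
    (hα : 0 < α) (hq : ∀ i, 0 < q i)
    (h1 : ∀ i, α * q i < 1) (h2 : ∀ i, α / q i < 1)
    {Ω : Type*} [MeasurableSpace Ω] (ℙ : Measure Ω)
    (ξ : Fin (2 * r) → Ω → ℕ)
    (hmeas : ∀ i, Measurable (ξ i))
    (hindep : ProbabilityTheory.iIndepFun ξ ℙ)
    (hlaw : ∀ i : Fin (2 * r), ∀ x : ℕ,
      ℙ {ω | ξ i ω = x} = ENNReal.ofReal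
        (if h : (i : ℕ) < r then
            (α * q ⟨i, h⟩) ^ x * (1 - α * q ⟨i, h⟩)
          else
            (α / q ⟨(i : ℕ) - r, by have := i.isLt; omega⟩) ^ x *
              (1 - α / q ⟨(i : ℕ) - r, by have := i.isLt; omega⟩))) :
    ∀ m : ℕ,
      ℙ {ω | (∑ i, ξ i ω) = m} =
        ENNReal.ofReal (α ^ m * (∏ i, (1 - α * q i) * (1 - α / q i)) *
          schur (2 * r) (fun j => if j = 0 then m else 0)
            (fun j => if h : j < r then q ⟨j, h⟩ else 1)) := by
  intro m
  set Q : ℕ → ℝ := fun j => if h : j < r then q ⟨j, h⟩ else 1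
  set c : Fin (2 * r) → ℝ := fun i => Q (i / 2) ^ (if (i : ℕ) % 2 = 0 then 1 else -1 : ℤ)
  set p : Fin (2 * r) → ℝ := fun i =>
    if h : (i : ℕ) < r then α * q ⟨i, h⟩ else α / q ⟨i - r, by omega⟩
  -- `ξ` lists the parameters in two blocks `αq_j`, `α/q_j`; the pattern rows alternate them.
  let e : Fin r ⊕ Fin r ≃ Fin (2 * r) := finSumFinEquiv.trans (finCongr (two_mul r).symm)
  have hp_inl (j : Fin r) : p (e (.inl j)) = α * q j := by simp [p, e]
  have hp_inr (j : Fin r) : p (e (.inr j)) = α / q j := by simp [p, e]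
  have hp_bounds : ∀ i, 0 ≤ p i ∧ p i ≤ 1 := e.forall_congr_right.mp fun
    | .inl j => hp_inl j ▸ ⟨(mul_pos hα (hq j)).le, (h1 j).le⟩
    | .inr j => hp_inr j ▸ ⟨(div_pos hα (hq j)).le, (h2 j).le⟩
  have hpc : p ∘ e = fun s => α * (c ∘ finSumFinEquivInterleave r) s := by
    funext s
    rcases s with j | j
    · simp [hp_inl, c, Q, finSumFinEquivInterleave]
    · have : (2 * (j : ℕ) + 1) / 2 = j := by omega
      simp [hp_inr, c, Q, finSumFinEquivInterleave, this, div_eq_mul_inv]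
  rw [measure_sum_eq_of_geometric hmeas hindep (fun i => (hp_bounds i).1) (fun i => (hp_bounds i).2)
    (fun i x => by rw [hlaw]; unfold p; split_ifs <;> rfl) m, schur_single_row]
  congr 1
  rw [← eval_hsymm_comp_equiv e p, hpc, eval_hsymm_const_mul, eval_hsymm_comp_equiv,
    ← Fintype.prod_equiv e _ _ fun _ => rfl, Fintype.prod_sum_type]
  simp only [hp_inl, hp_inr, prod_mul_distrib]
  ring
end

section
/- With a(q) = Π_{i=1}^r (1 - αq_i)(1 - αq_i^{-1}), the measure ν on ℕ given by ν(m) = α^m a(q) s_{γ_m}^{2r}(q) is a probability measure: Σ_{m=0}^∞ α^m a(q) s_{γ_m}^{2r}(q) = 1. -/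
lemma SGT.ext' {k : ℕ} {P Q : SGT k} (h : P.x = Q.x) : P = Q := by
  cases P; cases Q; cases h; rfl

/-- extend a `Fin k`-tuple by zero -/
def ext0 {k : ℕ} (d : Fin k → ℕ) (t : ℕ) : ℕ := if h : t < k then d ⟨t, h⟩ else 0

/-- partial sums -/
def pS {k : ℕ} (d : Fin k → ℕ) (i : ℕ) : ℕ := ∑ t ∈ Finset.range (i + 1), ext0 d t

lemma pS_succ {k : ℕ} (d : Fin k → ℕ) (i : ℕ) :
    pS d (i + 1) = pS d i + ext0 d (i + 1) := by
  simp [pS, Finset.sum_range_succ]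

lemma pS_mono {k : ℕ} (d : Fin k → ℕ) {i i' : ℕ} (h : i ≤ i') : pS d i ≤ pS d i' :=
  Finset.sum_le_sum_of_subset (Finset.range_subset_range.mpr (by omega))

lemma sum_ext0 {k : ℕ} (d : Fin k → ℕ) :
    ∑ t ∈ Finset.range k, ext0 d t = ∑ i, d i := by
  rw [← Fin.sum_univ_eq_sum_range (ext0 d) k]
  exact Finset.sum_congr rfl fun i _ => by simp [ext0]

/-- the pattern associated to a tuple of increments -/
def pattK {k : ℕ} (d : Fin k → ℕ) : SGT k where
  x i j := if i < k ∧ j = 0 then pS d i else 0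
  zero_outside := by
    intro i j h
    beta_reduce
    rw [if_neg ?_]
    unfold rowLen at h
    omega
  le_above := by
    intro i j hik hj
    by_cases hj0 : j = 0
    · subst hj0
      beta_reduce
      rw [if_pos (⟨by omega, rfl⟩ : i < k ∧ (0:ℕ) = 0), if_pos (⟨hik, rfl⟩ : i + 1 < k ∧ (0:ℕ) = 0)]
      exact pS_mono d (by omega)
    · beta_reduce
      rw [if_neg (by tauto)]
      exact Nat.zero_le _
  above_le := by
    intro i j hik hj
    beta_reduce
    rw [if_neg (by omega)]
    exact Nat.zero_le _

lemma pattK_x {k : ℕ} (d : Fin k → ℕ) (i j : ℕ) :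
    (pattK d).x i j = if i < k ∧ j = 0 then pS d i else 0 := rfl

lemma cols_zero {k m : ℕ} (P : SGT k)
    (htop : ∀ j, P.x (k - 1) j = if j = 0 then m else 0) :
    ∀ i j, 1 ≤ j → P.x i j = 0 := by
  intro i j hj
  induction' hd : k - 1 - i with t ih generalizing i
  · by_cases hik : i < k
    · have : i = k - 1 := by omega
      subst this
      rw [htop]
      simp [show j ≠ 0 by omega]
    · exact P.zero_outside i j (Or.inl (by omega))
  · have hik : i + 1 < k := by omega
    have h2 : P.x (i+1) j = 0 := ih (i+1) (by omega)
    by_cases hjr : j < rowLen i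
    · have := P.le_above i j hik hjr
      omega
    · exact P.zero_outside i j (Or.inr (by omega))

lemma rowSum_eq_x0 {k : ℕ} (P : SGT k) (hz : ∀ i j, 1 ≤ j → P.x i j = 0) (i : ℕ) :
    rowSum P i = P.x i 0 := by
  unfold rowSum
  rw [Finset.sum_eq_single_of_mem 0 (Finset.mem_range.mpr (by unfold rowLen; omega))]
  intro b _ hb
  exact hz i b (by omega)

lemma pattK_cols_zero {k : ℕ} (d : Fin k → ℕ) : ∀ i j, 1 ≤ j → (pattK d).x i j = 0 := by
  intro i j hj
  rw [pattK_x]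
  simp [show j ≠ 0 by omega]

lemma rowSum_pattK {k : ℕ} (d : Fin k → ℕ) {i : ℕ} (hik : i < k) :
    rowSum (pattK d) i = pS d i := by
  rw [rowSum_eq_x0 _ (pattK_cols_zero d), pattK_x]
  simp [hik]

lemma weight_pattK {k : ℕ} (d : Fin k → ℕ) (q : ℕ → ℝ) :
    weight (pattK d) q = ∏ i ∈ Finset.range k,
      q (i / 2) ^ ((if i % 2 = 0 then (1:ℤ) else -1) * (ext0 d i : ℤ)) := by
  unfold weight
  refine Finset.prod_congr rfl fun i hi => ?_
  rw [Finset.mem_range] at hi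
  congr 2
  rw [rowSum_pattK d hi]
  by_cases h0 : i = 0
  · subst h0
    simp [pS, ext0]
  · rw [if_neg h0, rowSum_pattK d (show i - 1 < k by omega)]
    have h3 : pS d i = pS d (i-1) + ext0 d i := by
      have h4 := pS_succ d (i-1)
      rwa [show i - 1 + 1 = i by omega] at h4
    rw [h3]
    push_cast
    ring

lemma pattK_top {k : ℕ} (d : Fin k → ℕ) (j : ℕ) :
    (pattK d).x (k-1) j = if j = 0 then (∑ i, d i) else 0 := by
  rcases Nat.eq_zero_or_pos k with hk | hk
  · subst hk
    rw [pattK_x, if_neg (by omega)]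
    simp
  · by_cases hj : j = 0
    · subst hj
      rw [pattK_x, if_pos ⟨by omega, rfl⟩, if_pos rfl]
      unfold pS
      rw [show k - 1 + 1 = k by omega, sum_ext0]
    · rw [pattK_x, if_neg (by tauto), if_neg hj]

lemma pattK_diffs {k m : ℕ} (P : SGT k)
    (htop : ∀ j, P.x (k-1) j = if j = 0 then m else 0) :
    ∃ d : Fin k → ℕ, (∑ i, d i) = m ∧ pattK d = P := by
  have hz := cols_zero P htop
  set d : Fin k → ℕ := fun i => P.x i 0 - (if i.val = 0 then 0 else P.x (i.val - 1) 0) with hd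
  have hmono : ∀ i, i + 1 < k → P.x i 0 ≤ P.x (i+1) 0 := fun i hik =>
    P.le_above i 0 hik (by unfold rowLen; omega)
  have hS : ∀ i, i < k → pS d i = P.x i 0 := by
    intro i
    induction i with
    | zero =>
      intro h0
      simp [pS, ext0, h0, hd]
    | succ n ih =>
      intro hnk
      rw [pS_succ, ih (by omega)]
      have he : ext0 d (n + 1) = P.x (n+1) 0 - P.x n 0 := by
        simp [ext0, hnk, hd]
      rw [he]
      have := hmono n hnk
      omega
  rcases Nat.eq_zero_or_pos k with hk0 | hk
  · refine ⟨d, ?_, ?_⟩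
    · subst hk0
      have h0 := htop 0
      rw [P.zero_outside _ 0 (Or.inl (by omega))] at h0
      simp at h0
      simp [← h0]
    · apply SGT.ext'
      funext i j
      subst hk0
      rw [pattK_x, if_neg (by omega)]
      exact (P.zero_outside i j (Or.inl (by omega))).symm
  · refine ⟨d, ?_, ?_⟩
    · rw [← sum_ext0 d]
      have h1 := hS (k-1) (by omega)
      have h0 := htop 0
      rw [if_pos rfl] at h0
      unfold pS at h1
      rw [show k - 1 + 1 = k by omega] at h1
      omega
    · apply SGT.ext'
      funext i j
      rw [pattK_x]
      by_cases h : i < k ∧ j = 0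
      · obtain ⟨hik, hj⟩ := h
        subst hj
        rw [if_pos ⟨hik, rfl⟩]
        exact hS i hik
      · rw [if_neg h]
        push_neg at h
        by_cases hik : i < k
        · exact (hz i j (by have := h hik; omega)).symm
        · exact (P.zero_outside i j (Or.inl (by omega))).symm

lemma pattK_inj {k : ℕ} (d e : Fin k → ℕ) (h : pattK d = pattK e) : d = e := by
  have hx : ∀ i, i < k → pS d i = pS e i := by
    intro i hik
    have h2 := congrArg (fun P => SGT.x P i 0) h
    simpa [pattK_x, hik] using h2
  funext i
  obtain ⟨n, hn⟩ := i
  match n with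
  | 0 =>
    have h0 := hx 0 hn
    simpa [pS, ext0, hn] using h0
  | Nat.succ n =>
    have h1 := hx n (by omega)
    have h2 := hx (n+1) hn
    rw [pS_succ, pS_succ, h1] at h2
    have h3 : ext0 d (n+1) = ext0 e (n+1) := by omega
    simpa [ext0, hn] using h3

lemma schur_gamma (k m : ℕ) (q : ℕ → ℝ) :
    schur k (fun j => if j = 0 then m else 0) q =
      ∑ d ∈ Finset.Nat.antidiagonalTuple k m,
        ∏ i ∈ Finset.range k, q (i / 2) ^ ((if i % 2 = 0 then (1:ℤ) else -1) * (ext0 d i : ℤ)) := by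
  classical
  unfold schur
  have hset : {P : SGT k | ∀ j, P.x (k - 1) j = if j = 0 then m else 0}
      = ↑((Finset.Nat.antidiagonalTuple k m).image pattK) := by
    ext P
    simp only [Set.mem_setOf_eq, Finset.coe_image, Set.mem_image, Finset.mem_coe,
      Finset.Nat.mem_antidiagonalTuple]
    constructor
    · intro htop
      exact pattK_diffs P htop
    · rintro ⟨d, hdm, rfl⟩
      intro j
      rw [pattK_top, hdm]
  rw [hset, finsum_mem_coe_finset, Finset.sum_image (fun x _ y _ h => pattK_inj x y h)]
  exact Finset.sum_congr rfl fun d _ => weight_pattK d q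

lemma prod_pair (r : ℕ) (g : ℕ → ℝ) :
    ∏ i ∈ Finset.range (2*r), g i = ∏ j ∈ Finset.range r, (g (2*j) * g (2*j+1)) := by
  induction r with
  | zero => simp
  | succ n ih =>
    rw [Finset.prod_range_succ, ← ih, show 2*(n+1) = (2*n+1)+1 by ring,
      Finset.prod_range_succ, Finset.prod_range_succ]
    ring

set_option maxHeartbeats 1000000 in
lemma hasSum_pi_geom : ∀ (n : ℕ) (c : Fin n → ℝ), (∀ i, 0 ≤ c i) → (∀ i, c i < 1) →
    HasSum (fun d : Fin n → ℕ => ∏ i, c i ^ d i) (∏ i, (1 - c i)⁻¹) := by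
  intro n
  induction n with
  | zero =>
    intro c _ _
    have h := hasSum_single (f := fun d : Fin 0 → ℕ => ∏ i, c i ^ d i)
      (fun _ => 0) (fun b hb => absurd (Subsingleton.elim b _) hb)
    simpa using h
  | succ n ih =>
    intro c h0 h1
    have hgeo : HasSum (fun t : ℕ => (c 0) ^ t) (1 - c 0)⁻¹ :=
      hasSum_geometric_of_lt_one (h0 0) (h1 0)
    have htail := ih (fun i => c i.succ) (fun i => h0 _) (fun i => h1 _)
    have hnn1 : (0 : ℕ → ℝ) ≤ fun t => (c 0) ^ t := fun t => pow_nonneg (h0 0) t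
    have hnn2 : (0 : (Fin n → ℕ) → ℝ) ≤ fun d => ∏ i, (c i.succ) ^ d i :=
      fun d => Finset.prod_nonneg fun i _ => pow_nonneg (h0 _) _
    have hsummable : Summable (fun x : ℕ × (Fin n → ℕ) =>
        (c 0) ^ x.1 * ∏ i, (c i.succ) ^ x.2 i) :=
      Summable.mul_of_nonneg (f := fun t : ℕ => (c 0) ^ t)
        (g := fun d : Fin n → ℕ => ∏ i, (c i.succ) ^ d i)
        hgeo.summable htail.summable hnn1 hnn2
    have hmul := hgeo.mul htail hsummable
    have he := ((Fin.consEquiv (fun _ : Fin (n+1) => ℕ)).symm.hasSum_iff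
      (f := fun x : ℕ × (Fin n → ℕ) => (c 0) ^ x.1 * ∏ i, (c i.succ) ^ x.2 i)
      (a := (1 - c 0)⁻¹ * ∏ i : Fin n, (1 - c i.succ)⁻¹)).mpr hmul
    have heq : (fun x : ℕ × (Fin n → ℕ) => (c 0) ^ x.1 * ∏ i, (c i.succ) ^ x.2 i)
        ∘ (Fin.consEquiv (fun _ : Fin (n+1) => ℕ)).symm = fun d : Fin (n+1) → ℕ => ∏ i, c i ^ d i := by
      funext d
      rw [Fin.prod_univ_succ]
      rfl
    rw [heq] at he
    rw [Fin.prod_univ_succ]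
    exact he

lemma hasSum_group (n : ℕ) (f : (Fin n → ℕ) → ℝ) (T : ℝ) (hf : HasSum f T) :
    HasSum (fun m => ∑ d ∈ Finset.Nat.antidiagonalTuple n m, f d) T := by
  classical
  set σ := Equiv.sigmaFiberEquiv (fun d : Fin n → ℕ => ∑ i, d i) with hσ
  have hf' : HasSum (f ∘ σ) T := σ.hasSum_iff.mpr hf
  refine HasSum.sigma hf' ?_
  intro m
  let e' : {d : Fin n → ℕ // (∑ i, d i) = m} ≃ {d // d ∈ Finset.Nat.antidiagonalTuple n m} :=
    Equiv.subtypeEquivRight fun d => (Finset.Nat.mem_antidiagonalTuple).symm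
  have hfin := (Finset.Nat.antidiagonalTuple n m).hasSum f
  have h3 := (e'.hasSum_iff (f := f ∘ (Subtype.val))).mpr hfin
  have h4 : (fun c : {d : Fin n → ℕ // (∑ i, d i) = m} => (f ∘ σ) ⟨m, c⟩)
      = (f ∘ Subtype.val) ∘ e' := by
    funext c
    rfl
  rw [h4]
  exact h3

/-- The measure `ν(m) = α^m a(q) s_{γ_m}^{2r}(q)` on `ℕ` is a probability
measure: its total mass is `1`. -/
theorem nu_probability_measure (r : ℕ) (q : Fin r → ℝ) (α : ℝ)
    (hα : 0 < α) (hα1 : α < 1) (hq : ∀ i, 0 < q i)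
    (h1 : ∀ i, α * q i < 1) (h2 : ∀ i, α / q i < 1) :
    HasSum (fun m : ℕ =>
      α ^ m * (∏ i, (1 - α * q i) * (1 - α / q i)) *
        schur (2 * r) (fun j => if j = 0 then m else 0)
          (fun j => if h : j < r then q ⟨j, h⟩ else 1)) 1 := by
  classical
  set q' : ℕ → ℝ := fun j => if h : j < r then q ⟨j, h⟩ else 1 with hq'
  set A : ℝ := ∏ i, (1 - α * q i) * (1 - α / q i) with hA
  set c : ℕ → ℝ := fun i => α * q' (i / 2) ^ (if i % 2 = 0 then (1:ℤ) else -1) with hc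
  have hq'pos : ∀ j, 0 < q' j := by
    intro j
    by_cases h : j < r
    · simpa [hq', dif_pos h] using hq ⟨j, h⟩
    · simp [hq', dif_neg h]
  have hq'lt1 : ∀ j, α * q' j < 1 := by
    intro j
    by_cases h : j < r
    · simpa [hq', dif_pos h] using h1 ⟨j, h⟩
    · simp only [hq', dif_neg h, mul_one]
      exact hα1
  have hq'lt2 : ∀ j, α / q' j < 1 := by
    intro j
    by_cases h : j < r
    · simpa [hq', dif_pos h] using h2 ⟨j, h⟩
    · simp only [hq', dif_neg h, div_one]
      exact hα1
  have hc0 : ∀ i, 0 ≤ c i := fun i =>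
    mul_nonneg hα.le (zpow_nonneg (hq'pos _).le _)
  have hceven : ∀ j, c (2*j) = α * q' j := by
    intro j
    have e1 : (2*j) % 2 = 0 := by omega
    have e2 : (2*j) / 2 = j := by omega
    simp only [hc, e1, e2, if_pos, zpow_one]
  have hcodd : ∀ j, c (2*j+1) = α / q' j := by
    intro j
    have e1 : (2*j+1) % 2 = 1 := by omega
    have e2 : (2*j+1) / 2 = j := by omega
    simp only [hc, e1, e2]
    norm_num
    rw [div_eq_mul_inv]
  have hc1 : ∀ i, c i < 1 := by
    intro i
    by_cases hp : i % 2 = 0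
    · have : i = 2 * (i / 2) := by omega
      rw [this, hceven]
      exact hq'lt1 _
    · have : i = 2 * (i / 2) + 1 := by omega
      rw [this, hcodd]
      exact hq'lt2 _
  have hkey := hasSum_pi_geom (2*r) (fun i => c i.val) (fun i => hc0 _) (fun i => hc1 _)
  have hgrp := hasSum_group (2*r) _ _ hkey
  have hfun : ∀ m : ℕ, α ^ m * A * schur (2*r) (fun j => if j = 0 then m else 0) q'
      = A * ∑ d ∈ Finset.Nat.antidiagonalTuple (2*r) m, ∏ i : Fin (2*r), c i.val ^ d i := by
    intro m
    rw [schur_gamma, Finset.mul_sum, Finset.mul_sum]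
    refine Finset.sum_congr rfl fun d hd => ?_
    rw [Finset.Nat.mem_antidiagonalTuple] at hd
    have hh1 : ∏ i : Fin (2*r), c i.val ^ d i = ∏ i ∈ Finset.range (2*r), c i ^ ext0 d i := by
      rw [← Fin.prod_univ_eq_prod_range (fun i => c i ^ ext0 d i) (2*r)]
      exact Finset.prod_congr rfl fun i _ => by simp [ext0]
    have hh2 : α ^ m = ∏ i ∈ Finset.range (2*r), α ^ ext0 d i := by
      rw [Finset.prod_pow_eq_pow_sum, sum_ext0, hd]
    rw [hh1, hh2, mul_comm _ A, mul_assoc, ← Finset.prod_mul_distrib]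
    congr 1
    refine Finset.prod_congr rfl fun i _ => ?_
    by_cases hp : i % 2 = 0
    · rw [if_pos hp, one_mul, zpow_natCast]
      simp only [hc, if_pos hp, zpow_one]
      rw [mul_pow]
    · rw [if_neg hp, neg_one_mul, zpow_neg, zpow_natCast]
      simp only [hc, if_neg hp]
      rw [zpow_neg_one, mul_pow, inv_pow]
  have hval : A * ∏ i : Fin (2*r), (1 - c i.val)⁻¹ = 1 := by
    have hA' : A = ∏ j ∈ Finset.range r, ((1 - α * q' j) * (1 - α / q' j)) := by
      rw [hA, ← Fin.prod_univ_eq_prod_range (fun j => (1 - α * q' j) * (1 - α / q' j)) r]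
      refine Finset.prod_congr rfl fun i _ => ?_
      simp [hq', dif_pos i.isLt]
    have hP : ∏ i : Fin (2*r), (1 - c i.val)⁻¹
        = ∏ j ∈ Finset.range r, ((1 - α * q' j)⁻¹ * (1 - α / q' j)⁻¹) := by
      rw [Fin.prod_univ_eq_prod_range (fun i => (1 - c i)⁻¹) (2*r), prod_pair]
      refine Finset.prod_congr rfl fun j _ => ?_
      rw [hceven j, hcodd j]
    rw [hA', hP, ← Finset.prod_mul_distrib, Finset.prod_eq_one]
    intro j _
    have hp1 : 1 - α * q' j ≠ 0 := by have := hq'lt1 j; nlinarith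
    have hp2 : 1 - α / q' j ≠ 0 := by have := hq'lt2 j; nlinarith
    field_simp
  have hfe : (fun m : ℕ => α ^ m * A * schur (2*r) (fun j => if j = 0 then m else 0) q')
      = fun m => A * ∑ d ∈ Finset.Nat.antidiagonalTuple (2*r) m,
          ∏ i : Fin (2*r), c i.val ^ d i := funext hfun
  rw [hfe, ← hval]
  exact hgrp.mul_left A
end

section
/- For λ ∈ W_{2r} (weakly decreasing in ℕ^r), the measure m_λ on W_{2r-1} defined by m_λ(β) = q_r^{|β| - |λ|} · s_β^{2r-1}(q)/s_λ^{2r}(q) for β ⪯ λ (and 0 otherwise) is a probability measure: Σ_{β ⪯ λ} q_r^{|β|-|λ|} s_β^{2r-1}(q) = s_λ^{2r}(q). -/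
lemma rowLen_mono {i j : ℕ} (h : i ≤ j) : rowLen i ≤ rowLen j :=
  Nat.div_le_div_right (by omega)

lemma SGT.step {k : ℕ} (P : SGT k) (i j : ℕ) (h : i + 1 < k) : P.x i j ≤ P.x (i+1) j := by
  by_cases hj : j < rowLen i
  · exact P.le_above i j h hj
  · rw [P.zero_outside i j (Or.inr (le_of_not_gt hj))]; exact Nat.zero_le _

lemma SGT.le_add {k : ℕ} (P : SGT k) (j : ℕ) :
    ∀ d i, i + d < k → P.x i j ≤ P.x (i + d) j := by
  intro d
  induction d with
  | zero => intro i _; exact le_rfl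
  | succ d ih =>
      intro i h
      calc P.x i j ≤ P.x (i+1) j := P.step i j (by omega)
        _ ≤ P.x (i+1+d) j := ih (i+1) (by omega)
        _ = P.x (i+(d+1)) j := by ring_nf

lemma SGT.le_top {k : ℕ} (P : SGT k) (i j : ℕ) (h : i < k) : P.x i j ≤ P.x (k-1) j := by
  have := P.le_add j (k-1-i) i (by omega)
  rwa [show i + (k-1-i) = k-1 by omega] at this

/-- The set of patterns with a given top row is finite. -/
lemma SGT.finite_top (k : ℕ) (lam : ℕ → ℕ) :
    {P : SGT k | ∀ j, P.x (k-1) j = lam j}.Finite := by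
  set N := ∑ j ∈ Finset.range (rowLen (k-1)), lam j with hN
  set S := {P : SGT k | ∀ j, P.x (k-1) j = lam j} with hSdef
  have hb : ∀ P : S, ∀ i j : ℕ, (P : SGT k).x i j < N + 1 := by
    rintro ⟨P, hP⟩ i j
    show P.x i j < N + 1
    rcases lt_or_ge i k with hi | hi
    · by_cases hj : j < rowLen i
      · have h1 : P.x i j ≤ P.x (k-1) j := P.le_top i j hi
        have h2 : P.x (k-1) j = lam j := hP j
        have hj' : j < rowLen (k-1) := lt_of_lt_of_le hj (rowLen_mono (by omega))
        have h3 : lam j ≤ N :=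
          Finset.single_le_sum (f := lam) (fun _ _ => Nat.zero_le _)
            (Finset.mem_range.mpr hj')
        omega
      · rw [P.zero_outside i j (Or.inr (le_of_not_gt hj))]; omega
    · rw [P.zero_outside i j (Or.inl hi)]; omega
  have hinj : Function.Injective
      (fun P : S => fun (i : Fin k) (j : Fin (rowLen (k-1))) =>
        (⟨(P : SGT k).x i j, hb P i j⟩ : Fin (N+1))) := by
    rintro ⟨P, hP⟩ ⟨Q, hQ⟩ h
    apply Subtype.ext; apply SGT.ext'
    funext i j
    rcases lt_or_ge i k with hi | hi
    · by_cases hj : j < rowLen (k-1)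
      · have := congrFun (congrFun h ⟨i, hi⟩) ⟨j, hj⟩
        simpa using congrArg Fin.val this
      · have hji : rowLen i ≤ j :=
          le_trans (rowLen_mono (show i ≤ k - 1 by omega)) (le_of_not_gt hj)
        rw [P.zero_outside i j (Or.inr hji), Q.zero_outside i j (Or.inr hji)]
    · rw [P.zero_outside i j (Or.inl hi), Q.zero_outside i j (Or.inl hi)]
  exact Set.finite_coe_iff.mp (Finite.of_injective _ hinj)

/-- Finiteness of bounded sets of vectors. -/
lemma finite_bounded (r M : ℕ) :
    {β : ℕ → ℕ | (∀ j, r ≤ j → β j = 0) ∧ (∀ j, β j ≤ M)}.Finite := by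
  set S := {β : ℕ → ℕ | (∀ j, r ≤ j → β j = 0) ∧ (∀ j, β j ≤ M)} with hSdef
  have hinj : Function.Injective
      (fun β : S => fun (j : Fin r) => (⟨(β : ℕ → ℕ) j, by
        have := (β.2).2 j; omega⟩ : Fin (M+1))) := by
    rintro ⟨β, hβ⟩ ⟨γ, hγ⟩ h
    apply Subtype.ext
    funext j
    show β j = γ j
    rcases lt_or_ge j r with hj | hj
    · have := congrFun h ⟨j, hj⟩
      simpa using congrArg Fin.val this
    · rw [hβ.1 j hj, hγ.1 j hj]
  exact Set.finite_coe_iff.mp (Finite.of_injective _ hinj)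

/-- Truncation of a depth `2r` pattern to depth `2r-1`. -/
def trunc (r : ℕ) (P : SGT (2*r)) : SGT (2*r-1) where
  x i j := if i < 2*r-1 then P.x i j else 0
  zero_outside i j h := by
    by_cases hi : i < 2*r-1
    · simp only [if_pos hi]
      exact P.zero_outside i j (Or.inr (h.resolve_left (by omega)))
    · simp [hi]
  le_above i j hi hj := by
    simp only [if_pos (show i < 2*r-1 by omega), if_pos (show i+1 < 2*r-1 from hi)]
    exact P.le_above i j (by omega) hj
  above_le i j hi hj := by
    simp only [if_pos (show i < 2*r-1 by omega), if_pos (show i+1 < 2*r-1 from hi)]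
    exact P.above_le i j (by omega) hj

/-- Gluing a top row `lam` onto a depth `2r-1` pattern with top row `β ⪯ lam`. -/
def glue (r : ℕ) (lam β : ℕ → ℕ) (Q : SGT (2*r-1)) (hr : 0 < r)
    (hl : ∀ j, r ≤ j → lam j = 0)
    (h1 : ∀ j, j < r → β j ≤ lam j) (h2 : ∀ j, j + 1 < r → lam (j+1) ≤ β j)
    (hQ : ∀ j, Q.x (2*r-1-1) j = β j) : SGT (2*r) where
  x i j := if i < 2*r-1 then Q.x i j else if i = 2*r-1 then lam j else 0
  zero_outside i j h := by
    by_cases hi : i < 2*r-1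
    · simp only [if_pos hi]
      exact Q.zero_outside i j (Or.inr (h.resolve_left (by omega)))
    · by_cases hi2 : i = 2*r-1
      · simp only [if_neg hi, if_pos hi2]
        apply hl
        subst hi2
        have hrl : rowLen (2*r-1) = r := by simp [rowLen]; omega
        omega
      · simp [hi, hi2]
  le_above i j hi hj := by
    by_cases hi1 : i + 1 < 2*r-1
    · simp only [if_pos (show i < 2*r-1 by omega), if_pos hi1]
      exact Q.le_above i j hi1 hj
    · have hieq : i = 2*r-2 := by omega
      simp only [if_pos (show i < 2*r-1 by omega), if_neg (show ¬ (i+1 < 2*r-1) from hi1),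
        if_pos (show i+1 = 2*r-1 by omega)]
      have hjr : j < r := by
        have : rowLen i = r := by rw [hieq]; simp [rowLen]; omega
        omega
      have : Q.x i j = β j := by rw [show i = 2*r-1-1 by omega]; exact hQ j
      rw [this]
      exact h1 j hjr
  above_le i j hi hj := by
    by_cases hi1 : i + 1 < 2*r-1
    · simp only [if_pos (show i < 2*r-1 by omega), if_pos hi1]
      exact Q.above_le i j hi1 hj
    · have hieq : i = 2*r-2 := by omega
      simp only [if_pos (show i < 2*r-1 by omega), if_neg (show ¬ (i+1 < 2*r-1) from hi1),
        if_pos (show i+1 = 2*r-1 by omega)]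
      have hjr : j + 1 < r := by
        have : rowLen (i+1) = r := by rw [show i+1 = 2*r-1 by omega]; simp [rowLen]; omega
        omega
      have : Q.x i j = β j := by rw [show i = 2*r-1-1 by omega]; exact hQ j
      rw [this]
      exact h2 j hjr


lemma rowLen_odd (r : ℕ) (hr : 0 < r) : rowLen (2*r-1) = r := by
  unfold rowLen; omega

lemma rowLen_even (r : ℕ) (hr : 0 < r) : rowLen (2*r-2) = r := by
  unfold rowLen; omega

lemma weight_glue (r : ℕ) (hr : 0 < r) (q : ℕ → ℝ) (lam β : ℕ → ℕ) (Q : SGT (2*r-1))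
    (hl : ∀ j, r ≤ j → lam j = 0)
    (h1 : ∀ j, j < r → β j ≤ lam j) (h2 : ∀ j, j + 1 < r → lam (j+1) ≤ β j)
    (hQ : ∀ j, Q.x (2*r-1-1) j = β j) :
    weight (glue r lam β Q hr hl h1 h2 hQ) q =
      q (r-1) ^ ((∑ j ∈ Finset.range r, (β j : ℤ)) -
          ∑ j ∈ Finset.range r, (lam j : ℤ)) * weight Q q := by
  set G := glue r lam β Q hr hl h1 h2 hQ with hG
  have hx : ∀ i j, i < 2*r-1 → G.x i j = Q.x i j := by
    intro i j hi
    rw [hG]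
    simp only [glue]
    rw [if_pos hi]
  have hrow : ∀ i, i < 2*r-1 → rowSum G i = rowSum Q i := by
    intro i hi
    unfold rowSum
    exact Finset.sum_congr rfl fun j _ => hx i j hi
  unfold weight
  have hre : Finset.range (2*r) = Finset.range ((2*r-1)+1) := by congr 1; omega
  rw [hre, Finset.prod_range_succ]
  have hmain : (∏ i ∈ Finset.range (2*r-1),
      q (i / 2) ^ ((if i % 2 = 0 then (1 : ℤ) else -1) *
        ((rowSum G i : ℤ) - (if i = 0 then 0 else (rowSum G (i - 1) : ℤ))))) =
      ∏ i ∈ Finset.range (2*r-1),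
      q (i / 2) ^ ((if i % 2 = 0 then (1 : ℤ) else -1) *
        ((rowSum Q i : ℤ) - (if i = 0 then 0 else (rowSum Q (i - 1) : ℤ)))) := by
    refine Finset.prod_congr rfl fun i hi => ?_
    rw [Finset.mem_range] at hi
    rw [hrow i hi]
    by_cases h0 : i = 0
    · simp [h0]
    · rw [if_neg h0, if_neg h0, hrow (i-1) (by omega)]
  rw [hmain]
  have hrtop : rowSum G (2*r-1) = ∑ j ∈ Finset.range r, lam j := by
    unfold rowSum
    rw [rowLen_odd r hr]
    refine Finset.sum_congr rfl fun j _ => ?_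
    rw [hG]; simp only [glue]
    rw [if_neg (show ¬ (2*r-1 < 2*r-1) by omega)]
    simp
  have hrsub : rowSum G (2*r-1-1) = ∑ j ∈ Finset.range r, β j := by
    unfold rowSum
    rw [show rowLen (2*r-1-1) = r by unfold rowLen; omega]
    refine Finset.sum_congr rfl fun j _ => ?_
    rw [hx (2*r-1-1) j (by omega)]
    exact hQ j
  rw [if_neg (show ¬ (2*r-1) % 2 = 0 by omega), if_neg (show ¬ (2*r-1) = 0 by omega),
    show (2*r-1)/2 = r - 1 by omega, hrtop, hrsub, mul_comm]
  congr 1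
  push_cast
  ring

/-- The measure `m_λ(β) = q_r^{|β|-|λ|} s_β^{2r-1}(q)/s_λ^{2r}(q)` on `{β ⪯ λ}` is a
probability measure: `Σ_{β ⪯ λ} q_r^{|β|-|λ|} s_β^{2r-1}(q) = s_λ^{2r}(q)`. -/
theorem m_lambda_probability (r : ℕ) (hr : 0 < r) (q : ℕ → ℝ) (hq : ∀ i, 0 < q i)
    (lam : ℕ → ℕ) (hdec : ∀ j, lam (j + 1) ≤ lam j)
    (hsupp : ∀ j, r ≤ j → lam j = 0) :
    ∑ᶠ β ∈ {β : ℕ → ℕ | (∀ j, r ≤ j → β j = 0) ∧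
        (∀ j, j < r → β j ≤ lam j) ∧ (∀ j, j + 1 < r → lam (j + 1) ≤ β j)},
      q (r - 1) ^ ((∑ j ∈ Finset.range r, (β j : ℤ)) -
          ∑ j ∈ Finset.range r, (lam j : ℤ)) *
        schur (2 * r - 1) β q
      = schur (2 * r) lam q := by
  classical
  have hlam0 : ∀ j, lam j ≤ lam 0 := fun j =>
    (antitone_nat_of_succ_le hdec) (Nat.zero_le j)
  have hBfin : {β : ℕ → ℕ | (∀ j, r ≤ j → β j = 0) ∧
      (∀ j, j < r → β j ≤ lam j) ∧ (∀ j, j + 1 < r → lam (j + 1) ≤ β j)}.Finite := by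
    refine (finite_bounded r (lam 0)).subset ?_
    rintro β ⟨hb0, hb1, _⟩
    refine ⟨hb0, fun j => ?_⟩
    rcases lt_or_ge j r with hj | hj
    · exact le_trans (hb1 j hj) (hlam0 j)
    · rw [hb0 j hj]; exact Nat.zero_le _
  rw [finsum_mem_eq_finite_toFinset_sum _ hBfin]
  rw [schur, finsum_mem_eq_finite_toFinset_sum _ (SGT.finite_top (2*r) lam)]
  have hexp : ∀ β ∈ hBfin.toFinset,
      q (r - 1) ^ ((∑ j ∈ Finset.range r, (β j : ℤ)) -
          ∑ j ∈ Finset.range r, (lam j : ℤ)) * schur (2 * r - 1) β q =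
      ∑ Q ∈ (SGT.finite_top (2*r-1) β).toFinset,
        q (r - 1) ^ ((∑ j ∈ Finset.range r, (β j : ℤ)) -
            ∑ j ∈ Finset.range r, (lam j : ℤ)) * weight Q q := by
    intro β _
    rw [schur, finsum_mem_eq_finite_toFinset_sum _ (SGT.finite_top (2*r-1) β),
      Finset.mul_sum]
  rw [Finset.sum_congr rfl hexp, Finset.sum_sigma']
  refine Finset.sum_bij'
    (i := fun a ha => glue r lam a.1 a.2 hr hsupp
        (fun j hj => (hBfin.mem_toFinset.mp (Finset.mem_sigma.mp ha).1).2.1 j hj)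
        (fun j hj => (hBfin.mem_toFinset.mp (Finset.mem_sigma.mp ha).1).2.2 j hj)
        (fun j => ((SGT.finite_top (2*r-1) a.1).mem_toFinset.mp
          (Finset.mem_sigma.mp ha).2) j))
    (j := fun P hP => ⟨P.x (2*r-2), trunc r P⟩)
    ?_ ?_ ?_ ?_ ?_
  · -- i maps into target
    intro a ha
    rw [(SGT.finite_top (2*r) lam).mem_toFinset]
    intro j
    simp only [glue]
    rw [if_neg (show ¬ (2*r-1 < 2*r-1) by omega)]
    simp
  · -- j maps into source
    intro P hP
    rw [(SGT.finite_top (2*r) lam).mem_toFinset] at hP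
    rw [Finset.mem_sigma]
    constructor
    · rw [hBfin.mem_toFinset]
      refine ⟨fun j hj => P.zero_outside (2*r-2) j (Or.inr (by rw [rowLen_even r hr]; omega)),
        fun j hj => ?_, fun j hj => ?_⟩
      · have := P.le_above (2*r-2) j (by omega) (by rw [rowLen_even r hr]; omega)
        rw [show 2*r-2+1 = 2*r-1 by omega, hP j] at this
        exact this
      · have := P.above_le (2*r-2) j (by omega)
          (by rw [show 2*r-2+1 = 2*r-1 by omega, rowLen_odd r hr]; omega)
        rw [show 2*r-2+1 = 2*r-1 by omega, hP (j+1)] at this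
        exact this
    · rw [(SGT.finite_top (2*r-1) (P.x (2*r-2))).mem_toFinset]
      intro j
      simp only [trunc]
      rw [if_pos (show 2*r-1-1 < 2*r-1 by omega), show 2*r-1-1 = 2*r-2 by omega]
  · -- left inverse
    intro a ha
    have hQtop : ∀ j, a.2.x (2*r-1-1) j = a.1 j :=
      (SGT.finite_top (2*r-1) a.1).mem_toFinset.mp (Finset.mem_sigma.mp ha).2
    refine Sigma.ext ?_ (heq_of_eq ?_)
    · funext j
      simp only [glue]
      rw [if_pos (show 2*r-2 < 2*r-1 by omega), show 2*r-2 = 2*r-1-1 by omega]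
      exact hQtop j
    · apply SGT.ext'
      funext i j
      simp only [trunc, glue]
      by_cases hi : i < 2*r-1
      · rw [if_pos hi, if_pos hi]
      · rw [if_neg hi, a.2.zero_outside i j (Or.inl (by omega))]
  · -- right inverse
    intro P hP
    rw [(SGT.finite_top (2*r) lam).mem_toFinset] at hP
    apply SGT.ext'
    funext i j
    simp only [glue, trunc]
    by_cases hi : i < 2*r-1
    · rw [if_pos hi, if_pos hi]
    · rw [if_neg hi]
      by_cases hi2 : i = 2*r-1
      · rw [if_pos hi2, hi2, hP j]
      · rw [if_neg hi2, P.zero_outside i j (Or.inl (by omega))]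
  · -- summand equality
    intro a ha
    rw [weight_glue]
end
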